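/- Let ρ(s) = |Ψ(s)⟩⟨Ψ(s)| be a differentiable family of pure states satisfying i d/ds |Ψ(s)⟩ = H(s)|Ψ(s)⟩ where H(s) = Σ_u H_u(s), and let X be a subsystem with reduced state ρ_X(s) = Tr_{X^c} ρ(s). If each H_u(s) can be approximated by an operator H̄_u(s) supported on X^c with ‖H̄_u(s) − H_u(s)‖ ≤ ε_u(s), then ‖∂_s ρ_X(s)‖₁ ≤ 2 Σ_u ε_u(s). -/

import Mathlib

open Matrix Kronecker
open scoped ComplexOrder

/-- The trace norm `‖A‖₁ = Tr √(A†A)`. -/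
noncomputable def traceNorm {n : Type*} [Fintype n] [DecidableEq n]
    (A : Matrix n n ℂ) : ℝ :=
  (((Matrix.isHermitian_conjTranspose_mul_self A).eigenvectorUnitary.1 *
      diagonal (((↑) : ℝ → ℂ) ∘ (√·) ∘ (Matrix.isHermitian_conjTranspose_mul_self A).eigenvalues) *
      (star (Matrix.isHermitian_conjTranspose_mul_self A).eigenvectorUnitary :
        Matrix n n ℂ)).trace).re

/-- The operator (spectral) norm of a matrix. -/
noncomputable def opNorm {n : Type*} [Fintype n] [DecidableEq n]
    (A : Matrix n n ℂ) : ℝ :=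
  ‖Matrix.toEuclideanCLM (𝕜 := ℂ) A‖

/-! The derivative of `ρ = |Ψ⟩⟨Ψ|` is the Hermitian matrix `-i[H, ρ]`, so `D`, its partial trace,
is Hermitian and `‖D‖₁ = Tr(A D)` for the unitary sign matrix `A = sgn D`. By duality of the
partial trace, `Tr(A D) = -i Tr([A ⊗ 1, H] ρ)`. Since `A ⊗ 1` commutes with every `1 ⊗ K_u`,
`[A ⊗ 1, H] = Σ_u [A ⊗ 1, H_u - 1 ⊗ K_u]`, and each summand has expectation at most
`2 ‖H_u - 1 ⊗ K_u‖ ≤ 2 ε_u` in the pure state `ρ`. -/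

section OpNorm

open scoped InnerProductSpace Matrix.Norms.L2Operator

variable {n : Type*} [Fintype n] [DecidableEq n]

lemma opNorm_eq_l2_opNorm (A : Matrix n n ℂ) : opNorm A = ‖A‖ := rfl

lemma opNorm_nonneg (A : Matrix n n ℂ) : 0 ≤ opNorm A := norm_nonneg _

lemma opNorm_lie_le (A B : Matrix n n ℂ) : opNorm ⁅A, B⁆ ≤ 2 * opNorm A * opNorm B := by
  simp only [opNorm_eq_l2_opNorm, Ring.lie_def]
  calc ‖A * B - B * A‖ ≤ ‖A‖ * ‖B‖ + ‖B‖ * ‖A‖ :=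
        (norm_sub_le _ _).trans (add_le_add (norm_mul_le _ _) (norm_mul_le _ _))
    _ = 2 * ‖A‖ * ‖B‖ := by ring

lemma opNorm_le_one_of_mem_unitaryGroup {U : Matrix n n ℂ} (hU : U ∈ unitaryGroup n ℂ) :
    opNorm U ≤ 1 := by
  rw [opNorm_eq_l2_opNorm, ← mul_one U, CStarRing.norm_mem_unitary_mul _ hU, cstar_norm_def,
    map_one]
  exact ContinuousLinearMap.norm_id_le

lemma norm_trace_mul_vecMulVec_star_le (G : Matrix n n ℂ) {ψ : n → ℂ} (hψ : star ψ ⬝ᵥ ψ = 1) :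
    ‖(G * vecMulVec ψ (star ψ)).trace‖ ≤ opNorm G := by
  set x : EuclideanSpace ℂ n := WithLp.toLp 2 ψ
  have hx : ‖x‖ = 1 := by
    have h := inner_self_eq_norm_sq_to_K (𝕜 := ℂ) x
    rw [EuclideanSpace.inner_toLp_toLp, dotProduct_comm, hψ] at h
    have h' : ((‖x‖ ^ 2 : ℝ) : ℂ) = 1 := by push_cast; exact h.symm
    exact (pow_eq_one_iff_of_nonneg (norm_nonneg x) two_ne_zero).mp (by exact_mod_cast h')
  have htr : (G * vecMulVec ψ (star ψ)).trace = ⟪x, toEuclideanCLM (𝕜 := ℂ) G x⟫_ℂ := by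
    rw [mul_vecMulVec, trace_vecMulVec, toEuclideanCLM_toLp, EuclideanSpace.inner_toLp_toLp]
  calc ‖(G * vecMulVec ψ (star ψ)).trace‖ ≤ ‖x‖ * ‖toEuclideanCLM (𝕜 := ℂ) G x‖ :=
        htr ▸ norm_inner_le_norm _ _
    _ ≤ ‖x‖ * (opNorm G * ‖x‖) := by gcongr; exact (toEuclideanCLM (𝕜 := ℂ) G).le_opNorm x
    _ = opNorm G := by rw [hx]; ring

lemma norm_trace_lie_mul_vecMulVec_star_le {B : Matrix n n ℂ} (hB : opNorm B ≤ 1)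
    (M : Matrix n n ℂ) {ψ : n → ℂ} (hψ : star ψ ⬝ᵥ ψ = 1) :
    ‖(⁅B, M⁆ * vecMulVec ψ (star ψ)).trace‖ ≤ 2 * opNorm M :=
  calc ‖(⁅B, M⁆ * vecMulVec ψ (star ψ)).trace‖ ≤ opNorm ⁅B, M⁆ :=
        norm_trace_mul_vecMulVec_star_le _ hψ
    _ ≤ 2 * opNorm B * opNorm M := opNorm_lie_le B M
    _ ≤ 2 * 1 * opNorm M := by gcongr; exact opNorm_nonneg M
    _ = 2 * opNorm M := by ring

end OpNorm

namespace Matrix.IsHermitian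

variable {n : Type*} [Fintype n] [DecidableEq n] {D : Matrix n n ℂ}

lemma traceNorm_eq_re_trace_cfc_abs (hD : D.IsHermitian) :
    traceNorm D = (cfc (fun x : ℝ => |x|) D).trace.re := by
  have hsq : Dᴴ * D = cfc (· ^ 2 : ℝ → ℝ) D := by
    rw [cfc_pow_id D 2 hD.isSelfAdjoint, hD.eq, sq]
  have hsqrt : cfc Real.sqrt (Dᴴ * D) = cfc (fun x : ℝ => |x|) D := by
    rw [hsq, ← cfc_comp Real.sqrt (· ^ 2) D]
    exact cfc_congr fun x _ => Real.sqrt_sq_eq_abs x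
  rw [← hsqrt, (isHermitian_conjTranspose_mul_self D).cfc_eq]
  rfl

lemma exists_mem_unitaryGroup_mul_eq_cfc_abs (hD : D.IsHermitian) :
    ∃ A ∈ unitaryGroup n ℂ, A * D = cfc (fun x : ℝ => |x|) D := by
  set sgn : ℝ → ℝ := fun x => if 0 ≤ x then 1 else -1
  have hcont : ContinuousOn sgn (spectrum ℝ D) := D.finite_real_spectrum.continuousOn _
  have hsgn_sq : cfc sgn D * cfc sgn D = 1 := by
    rw [← cfc_mul sgn sgn D hcont hcont, ← cfc_one ℝ D]
    exact cfc_congr fun x _ => by simp only [sgn]; split_ifs <;> norm_num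
  have hstar : star (cfc sgn D) = cfc sgn D := by
    rw [← cfc_star]
    rfl
  refine ⟨cfc sgn D, ⟨by rw [hstar, hsgn_sq], by rw [hstar, hsgn_sq]⟩, ?_⟩
  nth_rw 2 [← cfc_id' ℝ D hD.isSelfAdjoint]
  rw [← cfc_mul sgn _ D hcont]
  refine cfc_congr fun x _ => ?_
  simp only [sgn]
  split_ifs with hx
  · rw [one_mul, abs_of_nonneg hx]
  · rw [neg_one_mul, abs_of_neg (not_le.mp hx)]

lemma exists_mem_unitaryGroup_traceNorm_le (hD : D.IsHermitian) :
    ∃ A ∈ unitaryGroup n ℂ, traceNorm D ≤ ‖(A * D).trace‖ := by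
  obtain ⟨A, hA, hAD⟩ := hD.exists_mem_unitaryGroup_mul_eq_cfc_abs
  exact ⟨A, hA, hD.traceNorm_eq_re_trace_cfc_abs ▸ hAD ▸ Complex.re_le_norm _⟩

end Matrix.IsHermitian

namespace Matrix

variable {R m n : Type*} [Fintype n]

def partialTraceRight [AddCommMonoid R] (M : Matrix (m × n) (m × n) R) : Matrix m m R :=
  of fun i j => ∑ k, M (i, k) (j, k)

lemma trace_mul_partialTraceRight [Fintype m] [DecidableEq n] [CommSemiring R]
    (A : Matrix m m R) (M : Matrix (m × n) (m × n) R) :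
    (A * partialTraceRight M).trace = ((A ⊗ₖ (1 : Matrix n n R)) * M).trace := by
  simp only [trace, diag_apply, mul_apply, partialTraceRight, of_apply, Fintype.sum_prod_type,
    kroneckerMap_apply, one_apply, mul_ite, mul_one, mul_zero, ite_mul, zero_mul,
    Finset.sum_ite_eq, Finset.mem_univ, if_true, Finset.mul_sum]
  exact Finset.sum_congr rfl fun i _ => Finset.sum_comm

lemma IsHermitian.partialTraceRight [AddCommMonoid R] [StarAddMonoid R]
    {M : Matrix (m × n) (m × n) R} (hM : M.IsHermitian) : M.partialTraceRight.IsHermitian := by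
  ext i j
  simp only [conjTranspose_apply, Matrix.partialTraceRight, of_apply, star_sum]
  exact Finset.sum_congr rfl fun k _ => hM.apply (i, k) (j, k)

lemma commute_kronecker_one_one_kronecker [Fintype m] [DecidableEq m] [DecidableEq n]
    [CommSemiring R] (A : Matrix m m R) (K : Matrix n n R) :
    Commute (A ⊗ₖ (1 : Matrix n n R)) ((1 : Matrix m m R) ⊗ₖ K) := by
  simp only [Commute, SemiconjBy, ← mul_kronecker_mul, mul_one, one_mul]

lemma trace_mul_lie [CommRing R] (B H ρ : Matrix n n R) :
    (B * ⁅H, ρ⁆).trace = (⁅B, H⁆ * ρ).trace := by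
  rw [Ring.lie_def, Ring.lie_def, mul_sub, sub_mul, trace_sub, trace_sub, ← mul_assoc,
    ← mul_assoc B ρ, trace_mul_comm (B * ρ), ← mul_assoc]

lemma IsHermitian.neg_I_smul_lie {H ρ : Matrix n n ℂ} (hH : H.IsHermitian)
    (hρ : ρ.IsHermitian) : (-Complex.I • ⁅H, ρ⁆).IsHermitian := by
  rw [IsHermitian, conjTranspose_smul, Ring.lie_def, conjTranspose_sub, conjTranspose_mul,
    conjTranspose_mul, hH.eq, hρ.eq, star_neg, Complex.star_def, Complex.conj_I, neg_neg,
    ← neg_sub, smul_neg, ← neg_smul]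

end Matrix

lemma hasDerivAt_mul_conj_of_schrodinger {n : Type*} [Fintype n] {Ψ : ℝ → n → ℂ}
    {H : Matrix n n ℂ} {s : ℝ} (hH : H.IsHermitian)
    (hΨ : HasDerivAt Ψ ((-Complex.I) • (H *ᵥ Ψ s)) s) (v w : n) :
    HasDerivAt (fun t => Ψ t v * starRingEnd ℂ (Ψ t w))
      ((-Complex.I • ⁅H, vecMulVec (Ψ s) (star (Ψ s))⁆) v w) s := by
  refine ((hasDerivAt_pi.mp hΨ v).fun_mul (hasDerivAt_pi.mp hΨ w).star).congr_deriv ?_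
  simp only [Ring.lie_def, Matrix.smul_apply, Matrix.sub_apply, Matrix.mul_apply, vecMulVec_apply,
    Pi.smul_apply, mulVec, dotProduct, Pi.star_apply, star_sum, star_mul', star_neg, smul_eq_mul,
    Complex.star_def, Complex.conj_I, ← hH.apply w, Complex.conj_conj, Finset.sum_mul,
    Finset.mul_sum]
  rw [mul_sub, Finset.mul_sum, Finset.mul_sum, sub_eq_add_neg, ← Finset.sum_neg_distrib]
  congr 1 <;> exact Finset.sum_congr rfl fun i _ => by ring

/-- The core estimate of Appendix D: let `ρ(s) = |Ψ(s)⟩⟨Ψ(s)|` be a differentiable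
family of pure states on `H_X ⊗ H_{X^c}` with `i d/ds Ψ(s) = H(s) Ψ(s)`, where
`H(s) = Σ_u H_u(s)` (each term Hermitian).  If each `H_u(s)` is within `ε_u(s)` (in
operator norm) of an operator supported on `X^c` (i.e. of the form `I ⊗ K`), then
the derivative `D` of the reduced state `ρ_X(s) = Tr_{X^c} ρ(s)` satisfies
`‖D‖₁ ≤ 2 Σ_u ε_u(s)`. -/
theorem derivative_of_reduced_state_bound
    {a b : ℕ} {U : Type*} [Fintype U]
    (Ψ : ℝ → (Fin a × Fin b → ℂ))
    (Hu : U → ℝ → Matrix (Fin a × Fin b) (Fin a × Fin b) ℂ)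
    (ε : U → ℝ → ℝ)
    (hΨderiv : ∀ s, HasDerivAt Ψ
      ((-Complex.I) • ((∑ u, Hu u s).mulVec (Ψ s))) s)
    (hΨnorm : ∀ s, ∑ v, starRingEnd ℂ (Ψ s v) * Ψ s v = 1)
    (hherm : ∀ u s, (Hu u s).IsHermitian)
    (happrox : ∀ u s, ∃ K : Matrix (Fin b) (Fin b) ℂ,
      opNorm (Hu u s - (1 : Matrix (Fin a) (Fin a) ℂ) ⊗ₖ K) ≤ ε u s)
    (s : ℝ) (D : Matrix (Fin a) (Fin a) ℂ)
    (hD : ∀ i j, HasDerivAt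
      (fun t => ∑ tt : Fin b, Ψ t (i, tt) * starRingEnd ℂ (Ψ t (j, tt)))
      (D i j) s) :
    traceNorm D ≤ 2 * ∑ u, ε u s := by
  set H := ∑ u, Hu u s
  set ρ := vecMulVec (Ψ s) (star (Ψ s))
  have hH : H.IsHermitian := isSelfAdjoint_sum _ fun u _ => hherm u s
  have hDρ : D = partialTraceRight (-Complex.I • ⁅H, ρ⁆) := by
    ext i j
    exact (hD i j).unique
      (HasDerivAt.fun_sum fun k _ => hasDerivAt_mul_conj_of_schrodinger hH (hΨderiv s) _ _)
  have hDherm : D.IsHermitian :=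
    hDρ ▸ (hH.neg_I_smul_lie (posSemidef_vecMulVec_self_star (Ψ s)).isHermitian).partialTraceRight
  obtain ⟨A, hA, hAD⟩ := hDherm.exists_mem_unitaryGroup_traceNorm_le
  set B := A ⊗ₖ (1 : Matrix (Fin b) (Fin b) ℂ)
  have hB : opNorm B ≤ 1 :=
    opNorm_le_one_of_mem_unitaryGroup (kronecker_mem_unitary hA (one_mem _))
  choose K hK using fun u => happrox u s
  have hBH : ⁅B, H⁆ = ∑ u, ⁅B, Hu u s - 1 ⊗ₖ K u⁆ := by
    simp only [H, Ring.lie_def, Finset.mul_sum, Finset.sum_mul, ← Finset.sum_sub_distrib]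
    refine Finset.sum_congr rfl fun u _ => ?_
    rw [mul_sub, sub_mul, (commute_kronecker_one_one_kronecker A (K u)).eq]
    abel
  calc traceNorm D ≤ ‖(A * D).trace‖ := hAD
    _ = ‖(⁅B, H⁆ * ρ).trace‖ := by
      rw [hDρ, trace_mul_partialTraceRight, Matrix.mul_smul, trace_smul, trace_mul_lie,
        smul_eq_mul, norm_mul, norm_neg, Complex.norm_I, one_mul]
    _ = ‖∑ u, (⁅B, Hu u s - 1 ⊗ₖ K u⁆ * ρ).trace‖ := by rw [hBH, Finset.sum_mul, trace_sum]
    _ ≤ ∑ u, 2 * ε u s := by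
      refine (norm_sum_le _ _).trans (Finset.sum_le_sum fun u _ => ?_)
      exact (norm_trace_lie_mul_vecMulVec_star_le hB _ (hΨnorm s)).trans (by gcongr; exact hK u)
    _ = 2 * ∑ u, ε u s := (Finset.mul_sum _ _ _).symm
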